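/- arXiv:math/0410529 — 2 statements merged into one kernel-verified Lean document; each statement's English description precedes it below -/
import Mathlib

section
/- Let m_1,...,m_n be nonnegative integers and let A = (a_{ij}) be an n×n complex matrix. Then ( det(a_{ij} x_j^{m_i})_{1≤i,j≤n} · ∏_{1≤i<j≤n}(x_j - x_i) )* evaluated at (x,...,x) equals ∏_{1≤i<j≤n}(m_i - m_j) · ∏_{i=1}^n (x)_{m_i} · per(A). -/
open Finset

/-- For `Q = Σ c_d ∏ x_i^{d i}`, `starEval Q v = Σ c_d ∏ (v i)_{d i}`,
where `(x)_j` is the falling factorial. -/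
noncomputable def starEval {n : ℕ} (Q : MvPolynomial (Fin n) ℂ) (v : Fin n → ℂ) : ℂ :=
  ∑ d ∈ Q.support, Q.coeff d * ∏ i, (descPochhammer ℂ (d i)).eval (v i)

/-- The permanent of a square matrix. -/
noncomputable def perm {n : ℕ} (A : Matrix (Fin n) (Fin n) ℂ) : ℂ :=
  ∑ σ : Equiv.Perm (Fin n), ∏ i, A i (σ i)

section Aux
open MvPolynomial
variable {n : ℕ}

lemma starEval_eq_finsuppSum (Q : MvPolynomial (Fin n) ℂ) (v : Fin n → ℂ) :
    starEval Q v = Finsupp.sum (AddMonoidAlgebra.coeff Q) (fun d c => c * ∏ i, (descPochhammer ℂ (d i)).eval (v i)) := rfl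

lemma starEval_add (P Q : MvPolynomial (Fin n) ℂ) (v : Fin n → ℂ) :
    starEval (P + Q) v = starEval P v + starEval Q v := by
  rw [starEval_eq_finsuppSum, starEval_eq_finsuppSum, starEval_eq_finsuppSum, AddMonoidAlgebra.coeff_add]
  exact Finsupp.sum_add_index' (fun d => zero_mul _) (fun d a b => add_mul a b _)

lemma starEval_zero (v : Fin n → ℂ) : starEval (0 : MvPolynomial (Fin n) ℂ) v = 0 := by
  simp [starEval]

lemma starEval_sum {ι : Type*} (s : Finset ι) (f : ι → MvPolynomial (Fin n) ℂ) (v : Fin n → ℂ) :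
    starEval (∑ i ∈ s, f i) v = ∑ i ∈ s, starEval (f i) v := by
  classical
  induction s using Finset.induction_on with
  | empty => simp [starEval_zero]
  | insert a s h ih => rw [Finset.sum_insert h, Finset.sum_insert h, starEval_add, ih]

lemma starEval_monomial (d : Fin n →₀ ℕ) (c : ℂ) (v : Fin n → ℂ) :
    starEval (monomial d c) v = c * ∏ i, (descPochhammer ℂ (d i)).eval (v i) := by
  classical
  rcases eq_or_ne c 0 with rfl | hc
  · simp [starEval]
  · rw [starEval, MvPolynomial.support_monomial, if_neg hc, Finset.sum_singleton, MvPolynomial.coeff_monomial, if_pos rfl]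

lemma prod_X_pow (g : Fin n → ℕ) :
    (∏ i : Fin n, (X i : MvPolynomial (Fin n) ℂ) ^ g i) =
      monomial (Finsupp.equivFunOnFinite.symm g) 1 := by
  classical
  rw [← prod_X_pow_eq_monomial]
  refine (Finset.prod_subset (Finset.subset_univ _) ?_).symm
  intro i _ hi
  have h0 : (Finsupp.equivFunOnFinite.symm g) i = 0 := by
    simpa [Finsupp.mem_support_iff] using hi
  have h1 : g i = 0 := h0
  rw [h1, pow_zero]

lemma det_expand (m : Fin n → ℕ) (A : Matrix (Fin n) (Fin n) ℂ) :
    Matrix.det (Matrix.of fun i j : Fin n => C (A i j) * X j ^ m i) =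
      ∑ σ : Equiv.Perm (Fin n),
        monomial (Finsupp.equivFunOnFinite.symm fun j => m (σ j))
          (((Equiv.Perm.sign σ : ℤ) : ℂ) * ∏ i, A (σ i) i) := by
  rw [Matrix.det_apply]
  refine Finset.sum_congr rfl fun σ _ => ?_
  have h1 : (∏ i, (Matrix.of fun i j : Fin n => C (A i j) * X j ^ m i) (σ i) i)
      = C (∏ i, A (σ i) i) *
        monomial (Finsupp.equivFunOnFinite.symm fun j => m (σ j)) 1 := by
    simp only [Matrix.of_apply]
    rw [Finset.prod_mul_distrib, ← map_prod, prod_X_pow (fun j => m (σ j))]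
  rw [h1, C_mul_monomial, mul_one, Units.smul_def, zsmul_eq_mul,
    ← map_intCast (MvPolynomial.C : ℂ →+* MvPolynomial (Fin n) ℂ) ((Equiv.Perm.sign σ : ℤ)),
    C_mul_monomial]

lemma vand_expand :
    (∏ i : Fin n, ∏ j ∈ univ.filter (fun j => i < j),
        (X j - X i : MvPolynomial (Fin n) ℂ))
      = ∑ τ : Equiv.Perm (Fin n),
          monomial (Finsupp.equivFunOnFinite.symm fun j => ((τ⁻¹ j : Fin n) : ℕ))
            ((Equiv.Perm.sign τ : ℤ) : ℂ) := by
  have hv : (∏ i : Fin n, ∏ j ∈ univ.filter (fun j => i < j),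
        (X j - X i : MvPolynomial (Fin n) ℂ))
      = (Matrix.vandermonde fun i => (X i : MvPolynomial (Fin n) ℂ)).det := by
    rw [Matrix.det_vandermonde]
    refine Finset.prod_congr rfl fun i _ => Finset.prod_congr ?_ fun _ _ => rfl
    ext j; simp [Finset.mem_Ioi]
  rw [hv, Matrix.det_apply]
  refine Finset.sum_congr rfl fun τ _ => ?_
  have h1 : (∏ i, Matrix.vandermonde (fun i => (X i : MvPolynomial (Fin n) ℂ)) (τ i) i)
      = monomial (Finsupp.equivFunOnFinite.symm fun j => ((τ⁻¹ j : Fin n) : ℕ)) 1 := by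
    rw [← prod_X_pow (fun j => ((τ⁻¹ j : Fin n) : ℕ))]
    rw [← Equiv.prod_comp τ (fun j => (X j : MvPolynomial (Fin n) ℂ) ^ ((τ⁻¹ j : Fin n) : ℕ))]
    refine Finset.prod_congr rfl fun i _ => ?_
    simp [Matrix.vandermonde]
  rw [h1, Units.smul_def, zsmul_eq_mul,
    ← map_intCast (MvPolynomial.C : ℂ →+* MvPolynomial (Fin n) ℂ) ((Equiv.Perm.sign τ : ℤ)),
    C_mul_monomial, mul_one]

lemma detB_eq (m : Fin n → ℕ) (x : ℂ) :
    (∑ ρ : Equiv.Perm (Fin n), ((Equiv.Perm.sign ρ : ℤ) : ℂ) *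
        ∏ i, (descPochhammer ℂ (m i + ((ρ⁻¹ i : Fin n) : ℕ))).eval x)
      = (∏ i : Fin n, ∏ j ∈ univ.filter (fun j => i < j), ((m i : ℂ) - (m j : ℂ)))
          * ∏ i, (descPochhammer ℂ (m i)).eval x := by
  have step1 : (∑ ρ : Equiv.Perm (Fin n), ((Equiv.Perm.sign ρ : ℤ) : ℂ) *
        ∏ i, (descPochhammer ℂ (m i + ((ρ⁻¹ i : Fin n) : ℕ))).eval x)
      = Matrix.det (Matrix.of fun i j : Fin n =>
          (descPochhammer ℂ (m i + (j : ℕ))).eval x) := by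
    rw [Matrix.det_apply']
    refine Finset.sum_congr rfl fun ρ _ => ?_
    congr 1
    rw [← Equiv.prod_comp ρ
      (fun i => (descPochhammer ℂ (m i + ((ρ⁻¹ i : Fin n) : ℕ))).eval x)]
    refine Finset.prod_congr rfl fun k _ => ?_
    simp
  have hB : ∀ (i j : Fin n), (descPochhammer ℂ (m i + (j : ℕ))).eval x
      = ((descPochhammer ℂ (m i)).eval x) *
        ((descPochhammer ℂ (j : ℕ)).eval (x - (m i : ℂ))) := by
    intro i j
    rw [← descPochhammer_mul]
    simp [Polynomial.eval_comp]
  have step2 : Matrix.det (Matrix.of fun i j : Fin n =>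
          (descPochhammer ℂ (m i + (j : ℕ))).eval x)
      = (∏ i, (descPochhammer ℂ (m i)).eval x) *
        Matrix.det (Matrix.of fun i j : Fin n =>
          (descPochhammer ℂ (j : ℕ)).eval (x - (m i : ℂ))) := by
    rw [show (Matrix.of fun i j : Fin n => (descPochhammer ℂ (m i + (j : ℕ))).eval x)
        = Matrix.of fun i j : Fin n => ((descPochhammer ℂ (m i)).eval x) *
            (Matrix.of fun i j : Fin n =>
              (descPochhammer ℂ (j : ℕ)).eval (x - (m i : ℂ))) i j from by
          ext i j; exact hB i j]
    exact Matrix.det_mul_column _ _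
  have step3 : Matrix.det (Matrix.of fun i j : Fin n =>
          (descPochhammer ℂ (j : ℕ)).eval (x - (m i : ℂ)))
      = ∏ i : Fin n, ∏ j ∈ univ.filter (fun j => i < j), ((m i : ℂ) - (m j : ℂ)) := by
    rw [← Matrix.det_eval_matrixOfPolynomials_eq_det_vandermonde
        (fun i => x - (m i : ℂ)) (fun j => descPochhammer ℂ (j : ℕ))
        (fun i => descPochhammer_natDegree ℂ i)
        (fun i => monic_descPochhammer ℂ i)]
    rw [Matrix.det_vandermonde]
    refine Finset.prod_congr rfl fun i _ => ?_
    refine Finset.prod_congr ?_ fun j _ => by ring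
    ext j; simp [Finset.mem_Ioi]
  rw [step1, step2, step3, mul_comm]

theorem starEval_det_vandermonde' (m : Fin n → ℕ)
    (A : Matrix (Fin n) (Fin n) ℂ) :
    ∀ x : ℂ,
      starEval (Matrix.det (Matrix.of fun i j : Fin n =>
            MvPolynomial.C (A i j) * MvPolynomial.X j ^ m i)
          * ∏ i : Fin n, ∏ j ∈ univ.filter (fun j => i < j),
              (MvPolynomial.X j - MvPolynomial.X i))
        (fun _ => x)
        = (∏ i : Fin n, ∏ j ∈ univ.filter (fun j => i < j),
              ((m i : ℂ) - (m j : ℂ)))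
            * (∏ i, (descPochhammer ℂ (m i)).eval x) *
              ∑ σ : Equiv.Perm (Fin n), ∏ i, A i (σ i) := by
  intro x
  rw [det_expand, vand_expand, Finset.sum_mul_sum]
  simp only [monomial_mul, mul_one]
  rw [starEval_sum]
  rw [Finset.sum_congr rfl (fun σ _ => starEval_sum univ _ _)]
  rw [Finset.sum_congr rfl
    (fun σ _ => Finset.sum_congr rfl (fun τ _ => starEval_monomial _ _ _))]
  have hexp : ∀ (σ τ : Equiv.Perm (Fin n)) (i : Fin n),
      ((Finsupp.equivFunOnFinite.symm fun j => m (σ j)) +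
        (Finsupp.equivFunOnFinite.symm fun j => ((τ⁻¹ j : Fin n) : ℕ))) i
        = m (σ i) + ((τ⁻¹ i : Fin n) : ℕ) := fun σ τ i => rfl
  simp only [hexp]
  -- reindex inner sum: τ = σ⁻¹ * ρ
  have key : ∀ σ : Equiv.Perm (Fin n),
      (∑ τ : Equiv.Perm (Fin n),
        ((Equiv.Perm.sign σ : ℤ) : ℂ) * (∏ i, A (σ i) i) * ((Equiv.Perm.sign τ : ℤ) : ℂ) *
          ∏ i, (descPochhammer ℂ (m (σ i) + ((τ⁻¹ i : Fin n) : ℕ))).eval x)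
      = (∏ i, A (σ i) i) *
        ∑ ρ : Equiv.Perm (Fin n), ((Equiv.Perm.sign ρ : ℤ) : ℂ) *
          ∏ i, (descPochhammer ℂ (m i + ((ρ⁻¹ i : Fin n) : ℕ))).eval x := by
    intro σ
    rw [Finset.mul_sum]
    refine Fintype.sum_equiv (Equiv.mulLeft σ) _ _ fun ρ => ?_
    have hsign : ((Equiv.Perm.sign (σ * ρ) : ℤ) : ℂ)
        = ((Equiv.Perm.sign σ : ℤ) : ℂ) * ((Equiv.Perm.sign ρ : ℤ) : ℂ) := by
      rw [map_mul]; push_cast; ring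
    have hprod : (∏ i, (descPochhammer ℂ
          (m (σ i) + ((ρ⁻¹ i : Fin n) : ℕ))).eval x)
        = ∏ i, (descPochhammer ℂ (m i + (((σ * ρ)⁻¹ i : Fin n) : ℕ))).eval x := by
      rw [← Equiv.prod_comp σ
        (fun k => (descPochhammer ℂ (m k + (((σ * ρ)⁻¹ k : Fin n) : ℕ))).eval x)]
      refine Finset.prod_congr rfl fun i _ => ?_
      congr 2
      simp [Equiv.Perm.mul_apply]
    rw [Equiv.coe_mulLeft, hsign, hprod]
    ring
  rw [Finset.sum_congr rfl (fun σ _ => key σ), ← Finset.sum_mul, detB_eq]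
  have hperm : (∑ σ : Equiv.Perm (Fin n), ∏ i, A (σ i) i)
      = ∑ σ : Equiv.Perm (Fin n), ∏ i, A i (σ i) := by
    refine Fintype.sum_equiv (Equiv.inv _) _ _ fun σ => ?_
    rw [← Equiv.prod_comp σ⁻¹ (fun i => A (σ i) i)]
    refine Finset.prod_congr rfl fun i _ => by simp
  rw [hperm]
  ring

end Aux

/-- Corollary 2.1(i), case δ = 1. -/
theorem starEval_det_vandermonde {n : ℕ} (m : Fin n → ℕ)
    (A : Matrix (Fin n) (Fin n) ℂ) :
    ∀ x : ℂ,
      starEval (Matrix.det (Matrix.of fun i j : Fin n =>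
            MvPolynomial.C (A i j) * MvPolynomial.X j ^ m i)
          * ∏ i : Fin n, ∏ j ∈ univ.filter (fun j => i < j),
              (MvPolynomial.X j - MvPolynomial.X i)) (fun _ => x)
        = (∏ i : Fin n, ∏ j ∈ univ.filter (fun j => i < j),
              ((m i : ℂ) - (m j : ℂ)))
            * (∏ i, (descPochhammer ℂ (m i)).eval x) * perm A := by
  intro x
  rw [perm]
  exact starEval_det_vandermonde' m A x
end

section
/- Let m, n be positive integers. Then ( ∏_{1≤i<j≤n}(x_j^m - x_i^m) )* evaluated at (x-n+1, ..., x) equals 1!·2!···(n-1)! · m^{n(n-1)/2} · ∏_{r=0}^{n-1} (x)_{rm} / ∏_{r=0}^{n-1} (x)_r, as an identity of rational functions in x. -/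
open Finset

lemma starEval_def {n : ℕ} (Q : MvPolynomial (Fin n) ℂ) (v : Fin n → ℂ) :
    starEval Q v = (AddMonoidAlgebra.coeff Q).sum (fun d c => c * ∏ i, (descPochhammer ℂ (d i)).eval (v i)) := rfl

/-- `starEval` as an additive monoid hom in `Q`. -/
noncomputable def starEvalHom {n : ℕ} (v : Fin n → ℂ) : MvPolynomial (Fin n) ℂ →+ ℂ where
  toFun Q := starEval Q v
  map_zero' := by simp [starEval]
  map_add' P Q := by
    simp only [starEval_def]
    exact Finsupp.sum_add_index' (fun d => zero_mul _) (fun d b₁ b₂ => add_mul _ _ _)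

lemma starEvalHom_monomial {n : ℕ} (v : Fin n → ℂ) (d : Fin n →₀ ℕ) (c : ℂ) :
    starEvalHom v (MvPolynomial.monomial d c)
      = c * ∏ i, (descPochhammer ℂ (d i)).eval (v i) := by
  show starEval _ _ = _
  rw [starEval_def]
  exact Finsupp.sum_single_index (zero_mul _)

lemma prod_X_pow_univ {n : ℕ} (d : Fin n →₀ ℕ) :
    (∏ i, (MvPolynomial.X i : MvPolynomial (Fin n) ℂ) ^ d i)
      = MvPolynomial.monomial d 1 := by
  rw [← MvPolynomial.prod_X_pow_eq_monomial]
  exact (Finset.prod_subset (subset_univ _)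
    (fun i _ hi => by simp [Finsupp.notMem_support_iff.mp hi])).symm

/-- `starEval` of a determinant of powers of variables is a determinant of
falling factorials. -/
lemma starEval_det {n : ℕ} (e : Fin n → ℕ) (v : Fin n → ℂ) :
    starEval
      (Matrix.det (Matrix.of fun i j : Fin n =>
        (MvPolynomial.X i : MvPolynomial (Fin n) ℂ) ^ e j)) v
      = Matrix.det (Matrix.of fun i j : Fin n => (descPochhammer ℂ (e j)).eval (v i)) := by
  show starEvalHom v _ = _
  rw [Matrix.det_apply, Matrix.det_apply, map_sum]
  refine Finset.sum_congr rfl (fun σ _ => ?_)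
  have h1 : (∏ i, (Matrix.of fun i j : Fin n =>
        (MvPolynomial.X i : MvPolynomial (Fin n) ℂ) ^ e j) (σ i) i)
      = MvPolynomial.monomial (Finsupp.equivFunOnFinite.symm fun j => e (σ.symm j)) 1 := by
    rw [← prod_X_pow_univ]
    rw [← Equiv.prod_comp σ
      (fun j => (MvPolynomial.X j : MvPolynomial (Fin n) ℂ)
        ^ (Finsupp.equivFunOnFinite.symm fun j => e (σ.symm j)) j)]
    simp
  rw [Units.smul_def, Units.smul_def, map_zsmul, h1, starEvalHom_monomial, one_mul]
  congr 1
  simp only [Finsupp.coe_equivFunOnFinite_symm]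
  rw [← Equiv.prod_comp σ (fun j => (descPochhammer ℂ (e (σ.symm j))).eval (v j))]
  simp

lemma descPoch_eval_add (a b : ℕ) (x : ℂ) :
    (descPochhammer ℂ (a + b)).eval x
      = (descPochhammer ℂ a).eval x * (descPochhammer ℂ b).eval (x - a) := by
  rw [← descPochhammer_mul]
  simp [Polynomial.eval_comp]

lemma prod_Ioi_sub (n : ℕ) :
    (∏ i : Fin (n+1), ∏ j ∈ Ioi i, ((j : ℂ) - (i : ℂ)))
      = ∏ r ∈ range (n+1), (r.factorial : ℂ) := by
  rw [← Matrix.det_vandermonde (fun i : Fin (n+1) => (i : ℂ)),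
    Matrix.det_vandermonde_id_eq_superFactorial n, ← Nat.prod_range_succ_factorial n,
    Nat.cast_prod]

lemma stepC {m n : ℕ} (x : ℂ) :
    Matrix.det (Matrix.of fun i j : Fin (n+1) =>
        (descPochhammer ℂ (n - (i : ℕ))).eval (x - ((m * (j : ℕ) : ℕ) : ℂ)))
      = (m : ℂ) ^ ((n+1) * n / 2) * ∏ r ∈ range (n+1), (r.factorial : ℂ) := by
  rw [← Matrix.det_transpose, ← Matrix.det_submatrix_equiv_self Fin.revPerm]
  have h1 : (Matrix.transpose (Matrix.of fun i j : Fin (n+1) =>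
        (descPochhammer ℂ (n - (i : ℕ))).eval (x - ((m * (j : ℕ) : ℕ) : ℂ)))).submatrix Fin.revPerm Fin.revPerm
      = Matrix.of (fun i j : Fin (n+1) =>
          (descPochhammer ℂ ((j : ℕ))).eval
            (x - ((m * (n - (i : ℕ)) : ℕ) : ℂ))) := by
    ext i j
    have hj : (j : ℕ) ≤ n := Nat.lt_succ_iff.mp j.isLt
    simp only [Matrix.submatrix_apply, Matrix.transpose_apply, Matrix.of_apply,
      Fin.revPerm_apply, Fin.val_rev, Nat.succ_sub_succ, Nat.sub_sub_self hj]
  rw [h1, ← Matrix.det_eval_matrixOfPolynomials_eq_det_vandermonde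
      (fun i : Fin (n+1) => x - ((m * (n - (i : ℕ)) : ℕ) : ℂ))
      (fun j : Fin (n+1) => descPochhammer ℂ (j : ℕ))
      (fun j => descPochhammer_natDegree ℂ _) (fun j => monic_descPochhammer ℂ _)]
  have h2 : (fun i : Fin (n+1) => x - ((m * (n - (i : ℕ)) : ℕ) : ℂ))
      = fun i : Fin (n+1) => ((m : ℂ) * (i : ℕ)) + (x - m * n) := by
    funext i
    have hi : (i : ℕ) ≤ n := Nat.lt_succ_iff.mp i.isLt
    push_cast [Nat.cast_sub hi]
    ring
  rw [h2, Matrix.det_vandermonde_add, Matrix.det_vandermonde]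
  have h3 : ∀ i : Fin (n+1), ∏ j ∈ Ioi i, ((m : ℂ) * (j : ℕ) - (m : ℂ) * (i : ℕ))
      = (m : ℂ) ^ (Ioi i).card * ∏ j ∈ Ioi i, ((j : ℂ) - (i : ℂ)) := by
    intro i
    rw [← Finset.prod_const, ← Finset.prod_mul_distrib]
    exact Finset.prod_congr rfl fun j _ => by ring
  calc (∏ i : Fin (n+1), ∏ j ∈ Ioi i, ((m : ℂ) * (j : ℕ) - (m : ℂ) * (i : ℕ)))
      = ∏ i : Fin (n+1), ((m : ℂ) ^ (Ioi i).card * ∏ j ∈ Ioi i, ((j : ℂ) - (i : ℂ))) :=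
        Finset.prod_congr rfl fun i _ => h3 i
    _ = (∏ i : Fin (n+1), (m : ℂ) ^ (Ioi i).card)
          * ∏ i : Fin (n+1), ∏ j ∈ Ioi i, ((j : ℂ) - (i : ℂ)) := Finset.prod_mul_distrib
    _ = (m : ℂ) ^ ((n+1) * n / 2) * ∏ r ∈ range (n+1), (r.factorial : ℂ) := by
        rw [prod_Ioi_sub, Finset.prod_pow_eq_pow_sum]
        congr 2
        have hcard : ∀ i : Fin (n+1), (Ioi i).card = n - (i : ℕ) := fun i => by
          rw [Fin.card_Ioi]; omega
        simp_rw [hcard]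
        rw [Fin.sum_univ_eq_sum_range (fun r => n - r) (n+1)]
        have := Finset.sum_range_reflect (fun r => r) (n+1)
        simp only [Nat.add_sub_cancel] at this
        rw [this, Finset.sum_range_id]
        simp

lemma key {m n : ℕ} (hn : 0 < n) (x : ℂ) :
    (∏ r ∈ range n, (descPochhammer ℂ r).eval x) *
      Matrix.det (Matrix.of fun i j : Fin n =>
        (descPochhammer ℂ (m * (j : ℕ))).eval (x - ((n - 1 - (i : ℕ) : ℕ) : ℂ)))
    = (∏ r ∈ range n, (r.factorial : ℂ)) * (m : ℂ) ^ (n * (n - 1) / 2)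
        * ∏ r ∈ range n, (descPochhammer ℂ (r * m)).eval x := by
  obtain ⟨n, rfl⟩ : ∃ n', n = n' + 1 := ⟨n - 1, (Nat.succ_pred_eq_of_pos hn).symm⟩
  simp only [Nat.add_sub_cancel]
  have hv : ∏ r ∈ range (n+1), (descPochhammer ℂ r).eval x
      = ∏ i : Fin (n+1), (descPochhammer ℂ (n - (i : ℕ))).eval x := by
    rw [Fin.prod_univ_eq_prod_range (fun r => (descPochhammer ℂ (n - r)).eval x)]
    have := Finset.prod_range_reflect (fun r => (descPochhammer ℂ r).eval x) (n+1)
    simp only [Nat.add_sub_cancel] at this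
    exact this.symm
  rw [hv, ← Matrix.det_mul_column]
  have hA : (Matrix.of fun i j : Fin (n+1) =>
        (descPochhammer ℂ (n - (i : ℕ))).eval x *
          (Matrix.of fun i j : Fin (n+1) =>
            (descPochhammer ℂ (m * (j : ℕ))).eval (x - ((n - (i : ℕ) : ℕ) : ℂ))) i j)
      = Matrix.of fun i j : Fin (n+1) =>
          (descPochhammer ℂ (m * (j : ℕ))).eval x *
            (Matrix.of fun i j : Fin (n+1) =>
              (descPochhammer ℂ (n - (i : ℕ))).eval (x - ((m * (j : ℕ) : ℕ) : ℂ))) i j := by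
    ext i j
    simp only [Matrix.of_apply]
    rw [← descPoch_eval_add, ← descPoch_eval_add, add_comm]
  rw [hA, Matrix.det_mul_row]
  have hw : (∏ j : Fin (n+1), (descPochhammer ℂ (m * (j : ℕ))).eval x)
      = ∏ r ∈ range (n+1), (descPochhammer ℂ (r * m)).eval x := by
    rw [Fin.prod_univ_eq_prod_range (fun r => (descPochhammer ℂ (m * r)).eval x)]
    simp_rw [mul_comm m]
  rw [hw]
  have hC : Matrix.det (Matrix.of fun i j : Fin (n+1) =>
        (descPochhammer ℂ (n - (i : ℕ))).eval (x - ((m * (j : ℕ) : ℕ) : ℂ)))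
      = (m : ℂ) ^ ((n+1) * n / 2) * ∏ r ∈ range (n+1), (r.factorial : ℂ) := stepC x
  rw [hC]
  ring

/-- Formula (2.4): here the `i`-th variable (0-based) gets `x - (n-1-i)`. -/
theorem starEval_prod_pow_sub {m n : ℕ} (hm : 0 < m) (hn : 0 < n) :
    ∀ x : ℂ,
      (∏ r ∈ range n, (descPochhammer ℂ r).eval x)
        * starEval (∏ i : Fin n, ∏ j ∈ univ.filter (fun j => i < j),
              ((MvPolynomial.X j : MvPolynomial (Fin n) ℂ) ^ m
                - MvPolynomial.X i ^ m))
            (fun i => x - ((n - 1 - (i : ℕ) : ℕ) : ℂ))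
      = (∏ r ∈ range n, (r.factorial : ℂ)) * (m : ℂ) ^ (n * (n - 1) / 2)
          * ∏ r ∈ range n, (descPochhammer ℂ (r * m)).eval x := by
  intro x
  have hQ : (∏ i : Fin n, ∏ j ∈ univ.filter (fun j => i < j),
        ((MvPolynomial.X j : MvPolynomial (Fin n) ℂ) ^ m - MvPolynomial.X i ^ m))
      = Matrix.det (Matrix.of fun i j : Fin n =>
          (MvPolynomial.X i : MvPolynomial (Fin n) ℂ) ^ (m * (j : ℕ))) := by
    have h1 : (Matrix.of fun i j : Fin n =>
          (MvPolynomial.X i : MvPolynomial (Fin n) ℂ) ^ (m * (j : ℕ)))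
        = Matrix.vandermonde
            (fun i : Fin n => (MvPolynomial.X i : MvPolynomial (Fin n) ℂ) ^ m) := by
      ext i j
      simp [Matrix.vandermonde, pow_mul]
    rw [h1, Matrix.det_vandermonde]
    refine Finset.prod_congr rfl fun i _ => Finset.prod_congr ?_ fun _ _ => rfl
    ext j
    simp
  rw [hQ, starEval_det (fun j : Fin n => m * (j : ℕ))]
  exact key hn x
end
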